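/- Let ε = (ε¹₁,ε¹₂,ε²₁,ε²₂) ∈ [0,1/2]⁴. Then the following are equivalent: (a) for every p ∈ [0,1/2]⁴, (p, ε) ∈ ELFP; (b) max Sε ≤ 1/2. (This characterizes the set Fit for the no-constraint ('chaos') condition.) -/

import Mathlib

/-!
In ±1 spins, `ELFP p ε` asks for a law of the eight spins `Hᵏᵢⱼ` with zero means and with
correlations `4p - 1` on the four `p`-bonds `H¹ᵢⱼ – H²ᵢⱼ` and `4ε - 1` on the four `ε`-bonds;
these eight bonds form an 8-cycle.

Necessity: the bond spins of a cycle multiply to `1`, so for signs of product `-1` the signed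
sum of the eight bond spins is at most `6`. Taking `p ∈ {0, 1/2}` pins the `p`-bonds to `±1`, and
the expectation of that bound becomes `Sval ε s ≤ 1/2`.

Sufficiency: `maxS ε ≤ 1/2` says `∑ |4ε - 1| ≤ 2`. Draw the `p`-bonds independently with means
`4p - 1` and flip the first layer along them to get the second. It remains to realise the
4-cycle of the first layer (a 2 × 2 grid), whose column correlations are those of `ε²` twisted by
the bond signs; a 4-cycle with correlations `cₑ`, `|cₑ| ≤ 1`, `∑ |cₑ| ≤ 2` is realised by a
density `(E + |E| + κ) / 16` in the energy `E = ∑ cₑ · (bond spin)`.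
-/

open Finset

/-- The signed sum `±(x₁₁−¼) ± (x₁₂−¼) ± (x₂₁−¼) ± (x₂₂−¼)` over the four components of `x`,
with a `+` sign exactly where the sign choice `s` is `true`. -/
noncomputable def Sval (x : Fin 2 → Fin 2 → ℝ) (s : Fin 2 → Fin 2 → Bool) : ℝ :=
  ∑ i : Fin 2, ∑ j : Fin 2, (if s i j then (1 : ℝ) else -1) * (x i j - 1 / 4)

/-- The number of `+` signs in a sign choice. -/
def plusCount (s : Fin 2 → Fin 2 → Bool) : ℕ :=
  (Finset.univ.filter fun ij : Fin 2 × Fin 2 => s ij.1 ij.2 = true).card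

/-- `max Sx`: the maximum of the signed sums over all 16 sign choices. -/
noncomputable def maxS (x : Fin 2 → Fin 2 → ℝ) : ℝ :=
  Finset.univ.sup' Finset.univ_nonempty (Sval x)

/-- `max S₀x`: the maximum over sign choices with an even number of `+` signs. -/
noncomputable def maxS0 (x : Fin 2 → Fin 2 → ℝ) : ℝ :=
  (Finset.univ.filter fun s : Fin 2 → Fin 2 → Bool => Even (plusCount s)).sup'
    ⟨fun _ _ => false, by decide⟩ (Sval x)

/-- `max S₁x`: the maximum over sign choices with an odd number of `+` signs. -/
noncomputable def maxS1 (x : Fin 2 → Fin 2 → ℝ) : ℝ :=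
  (Finset.univ.filter fun s : Fin 2 → Fin 2 → Bool => ¬ Even (plusCount s)).sup'
    ⟨fun i j => i == 0 && j == 0, by decide⟩ (Sval x)

/-- `r ∈ S₀x`: `r` is one of the signed sums with an even number of `+` signs. -/
def memS0 (x : Fin 2 → Fin 2 → ℝ) (r : ℝ) : Prop :=
  ∃ s : Fin 2 → Fin 2 → Bool, Even (plusCount s) ∧ Sval x s = r

/-- The Extended Linear Feasibility Polytope: `(p, ε) ∈ ELFP` iff there is a joint
distribution on `({−1,+1})⁸` — encoded as `Fin 2 → Fin 2 → Fin 2 → Bool`, `h k i j` being the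
value of `Hᵏᵢⱼ` (`true` standing for `+1`) — with uniform ±1 one-dimensional marginals,
`Pr[H¹ᵢⱼ = +1, H²ᵢⱼ = +1] = p i j`, `Pr[H¹ᵢ₁ = +1, H¹ᵢ₂ = +1] = ε 0 i`, and
`Pr[H²₁ⱼ = +1, H²₂ⱼ = +1] = ε 1 j`. -/
def ELFP (p ε : Fin 2 → Fin 2 → ℝ) : Prop :=
  ∃ μ : (Fin 2 → Fin 2 → Fin 2 → Bool) → ℝ,
    (∀ h, 0 ≤ μ h) ∧
    (∑ h : Fin 2 → Fin 2 → Fin 2 → Bool, μ h = 1) ∧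
    (∀ k i j : Fin 2,
      ∑ h ∈ Finset.univ.filter
          (fun h : Fin 2 → Fin 2 → Fin 2 → Bool => h k i j = true), μ h = 1 / 2) ∧
    (∀ i j : Fin 2,
      ∑ h ∈ Finset.univ.filter
          (fun h : Fin 2 → Fin 2 → Fin 2 → Bool => h 0 i j = true ∧ h 1 i j = true), μ h
        = p i j) ∧
    (∀ i : Fin 2,
      ∑ h ∈ Finset.univ.filter
          (fun h : Fin 2 → Fin 2 → Fin 2 → Bool => h 0 i 0 = true ∧ h 0 i 1 = true), μ h
        = ε 0 i) ∧
    (∀ j : Fin 2,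
      ∑ h ∈ Finset.univ.filter
          (fun h : Fin 2 → Fin 2 → Fin 2 → Bool => h 1 0 j = true ∧ h 1 1 j = true), μ h
        = ε 1 j)

noncomputable section

def spin (b : Bool) : ℝ := if b then 1 else -1

@[simp] lemma spin_true : spin true = 1 := rfl
@[simp] lemma spin_false : spin false = -1 := rfl

@[simp] lemma spin_mul_self (b : Bool) : spin b * spin b = 1 := by
  cases b <;> norm_num

lemma spin_mul_spin_mul_self (a b : Bool) : spin a * spin b * (spin a * spin b) = 1 := by
  cases a <;> cases b <;> norm_num

lemma spin_beq (a b : Bool) : spin (a == b) = spin a * spin b := by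
  cases a <;> cases b <;> norm_num

lemma spin_xor (a b : Bool) : spin (xor a b) = -(spin a * spin b) := by
  cases a <;> cases b <;> norm_num

lemma abs_spin (b : Bool) : |spin b| = 1 := by
  cases b <;> norm_num

lemma abs_spin_mul_spin (a b : Bool) : |spin a * spin b| = 1 := by
  rw [abs_mul, abs_spin, abs_spin, mul_one]

lemma sum_eq_zero_of_comp_equiv_eq_neg {α : Type*} [Fintype α] (e : α ≃ α) (f : α → ℝ)
    (hf : ∀ x, f (e x) = -f x) : ∑ x, f x = 0 := by
  have h := Equiv.sum_comp e f
  simp only [hf, Finset.sum_neg_distrib] at h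
  linarith

lemma sum_le_card_sub_two_of_prod_eq_neg_one {ι : Type*} [Fintype ι] (a : ι → ℝ)
    (ha : ∀ i, |a i| = 1) (hprod : ∏ i, a i = -1) :
    ∑ i, a i ≤ Fintype.card ι - 2 := by
  classical
  obtain ⟨i₀, hi₀⟩ : ∃ i, a i = -1 := by
    by_contra! h
    have : ∏ i, a i = 1 :=
      Finset.prod_eq_one fun i _ => ((abs_eq zero_le_one).1 (ha i)).resolve_right (h i)
    linarith
  calc ∑ i, a i = a i₀ + ∑ i ∈ Finset.univ.erase i₀, a i :=
        (Finset.add_sum_erase _ _ (Finset.mem_univ i₀)).symm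
    _ ≤ -1 + ∑ _i ∈ Finset.univ.erase i₀, (1 : ℝ) := by
        rw [hi₀]; gcongr with i; exact (le_abs_self _).trans (ha i).le
    _ = Fintype.card ι - 2 := by
        rw [Finset.sum_const, Finset.card_erase_of_mem (Finset.mem_univ _), Finset.card_univ,
          nsmul_eq_mul, mul_one, Nat.cast_sub (Fintype.card_pos_iff.mpr ⟨i₀⟩)]
        push_cast; ring

/-! ### Products of independent spins -/

section Bernoulli

variable {ι : Type*} [Fintype ι]

def bernoulliProd (r : ι → ℝ) (t : ι → Bool) : ℝ := ∏ a, (1 + r a * spin (t a)) / 2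

lemma bernoulliProd_nonneg {r : ι → ℝ} (hr : ∀ a, |r a| ≤ 1) (t : ι → Bool) :
    0 ≤ bernoulliProd r t :=
  Finset.prod_nonneg fun a _ => by
    have : |r a * spin (t a)| ≤ 1 := by rw [abs_mul, abs_spin, mul_one]; exact hr a
    linarith [neg_abs_le (r a * spin (t a))]

variable [DecidableEq ι]

lemma sum_prod_eq_prod_sum (f : ι → Bool → ℝ) :
    ∑ t : ι → Bool, ∏ a, f a (t a) = ∏ a, (f a true + f a false) := by
  rw [← Fintype.prod_sum]
  simp only [Fintype.sum_bool]

lemma sum_bernoulliProd (r : ι → ℝ) : ∑ t, bernoulliProd r t = 1 := by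
  refine (sum_prod_eq_prod_sum fun a b => (1 + r a * spin b) / 2).trans ?_
  exact Finset.prod_eq_one fun a _ => by simp only [spin_true, spin_false]; ring

lemma sum_bernoulliProd_mul_spin (r : ι → ℝ) (a₀ : ι) :
    ∑ t, bernoulliProd r t * spin (t a₀) = r a₀ := by
  have h : ∀ t : ι → Bool, bernoulliProd r t * spin (t a₀) =
      ∏ a, (1 + r a * spin (t a)) / 2 * (if a = a₀ then spin (t a) else 1) := fun t => by
    rw [Finset.prod_mul_distrib, Finset.prod_ite_eq', if_pos (Finset.mem_univ _), bernoulliProd]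
  have hr : ∏ a, (if a = a₀ then r a else 1) = r a₀ :=
    (Finset.prod_ite_eq' _ _ _).trans (if_pos (Finset.mem_univ _))
  simp only [h]
  refine (sum_prod_eq_prod_sum fun a b =>
    (1 + r a * spin b) / 2 * (if a = a₀ then spin b else 1)).trans (hr ▸ ?_)
  refine Finset.prod_congr rfl fun a _ => ?_
  split_ifs <;> simp only [spin_true, spin_false] <;> ring

end Bernoulli

/-! ### Models of the four-cycle -/

abbrev Grid := Fin 2 → Fin 2 → Bool

lemma card_grid : Fintype.card Grid = 16 := rfl

def rowSpin (X : Grid) (i : Fin 2) : ℝ := spin (X i 0) * spin (X i 1)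

def colSpin (X : Grid) (j : Fin 2) : ℝ := spin (X 0 j) * spin (X 1 j)

def gridSign (X : Grid) : ℝ := ∏ i, ∏ j, spin (X i j)

lemma prod_rowSpin (X : Grid) : ∏ i, rowSpin X i = gridSign X := by
  simp only [rowSpin, gridSign, Fin.prod_univ_two]

lemma prod_colSpin (X : Grid) : ∏ j, colSpin X j = gridSign X := by
  simp only [colSpin, gridSign, Fin.prod_univ_two]; ring

lemma gridSign_mul_self (X : Grid) : gridSign X * gridSign X = 1 := by
  simp only [gridSign, ← Finset.prod_mul_distrib, spin_mul_self, Finset.prod_const_one]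

def xorMask (M : Grid) : Grid ≃ Grid :=
  Function.Involutive.toPerm (fun X i j => xor (M i j) (X i j)) fun X => by
    funext i j; simp

@[simp] lemma xorMask_apply (M X : Grid) (i j : Fin 2) :
    xorMask M X i j = xor (M i j) (X i j) := rfl

lemma rowSpin_xorMask (M X : Grid) (i : Fin 2) :
    rowSpin (xorMask M X) i = rowSpin M i * rowSpin X i := by
  simp only [rowSpin, xorMask_apply, spin_xor]; ring

lemma colSpin_xorMask (M X : Grid) (j : Fin 2) :
    colSpin (xorMask M X) j = colSpin M j * colSpin X j := by
  simp only [colSpin, xorMask_apply, spin_xor]; ring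

def checkerboard : Grid := fun i j => decide (i = j)

lemma rowSpin_checkerboard (i : Fin 2) : rowSpin checkerboard i = -1 := by
  fin_cases i <;> simp [rowSpin, checkerboard]

lemma colSpin_checkerboard (j : Fin 2) : colSpin checkerboard j = -1 := by
  fin_cases j <;> simp [colSpin, checkerboard]

lemma sum_pi_fin_two {α : Type*} [Fintype α] (F : (Fin 2 → α) → ℝ) :
    ∑ x, F x = ∑ a, ∑ b, F ![a, b] := by
  rw [← (piFinTwoEquiv fun _ => α).symm.sum_comp F, Fintype.sum_prod_type]
  rfl

lemma sum_grid (F : Grid → ℝ) :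
    ∑ X, F X = ∑ a, ∑ b, ∑ c, ∑ d, F ![![a, b], ![c, d]] := by
  simp only [sum_pi_fin_two]

def gridEnergy (a b : Fin 2 → ℝ) (X : Grid) : ℝ :=
  ∑ i, a i * rowSpin X i + ∑ j, b j * colSpin X j

lemma gridEnergy_xorMask (a b : Fin 2 → ℝ) (M X : Grid) :
    gridEnergy a b (xorMask M X) =
      gridEnergy (fun i => a i * rowSpin M i) (fun j => b j * colSpin M j) X := by
  simp only [gridEnergy, rowSpin_xorMask, colSpin_xorMask, mul_assoc]

lemma gridEnergy_xorMask_checkerboard (a b : Fin 2 → ℝ) (X : Grid) :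
    gridEnergy a b (xorMask checkerboard X) = -gridEnergy a b X := by
  rw [gridEnergy_xorMask]
  simp only [gridEnergy, rowSpin_checkerboard, colSpin_checkerboard, mul_neg_one, neg_mul,
    Finset.sum_neg_distrib, neg_add]

lemma sum_gridEnergy_mul_rowSpin (a b : Fin 2 → ℝ) (i : Fin 2) :
    ∑ X, gridEnergy a b X * rowSpin X i = 16 * a i := by
  fin_cases i <;>
    simp only [Fin.zero_eta, Fin.mk_one, sum_grid, Fintype.sum_bool, gridEnergy, rowSpin, colSpin,
      Fin.sum_univ_two, Matrix.cons_val_zero, Matrix.cons_val_one, Matrix.cons_val_fin_one,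
      spin_true, spin_false] <;>
    ring

lemma sum_gridEnergy_mul_colSpin (a b : Fin 2 → ℝ) (j : Fin 2) :
    ∑ X, gridEnergy a b X * colSpin X j = 16 * b j := by
  fin_cases j <;>
    simp only [Fin.zero_eta, Fin.mk_one, sum_grid, Fintype.sum_bool, gridEnergy, rowSpin, colSpin,
      Fin.sum_univ_two, Matrix.cons_val_zero, Matrix.cons_val_one, Matrix.cons_val_fin_one,
      spin_true, spin_false] <;>
    ring

lemma abs_rowSpin (X : Grid) (i : Fin 2) : |rowSpin X i| = 1 := by
  simp only [rowSpin, abs_mul, abs_spin, mul_one]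

lemma abs_colSpin (X : Grid) (j : Fin 2) : |colSpin X j| = 1 := by
  simp only [colSpin, abs_mul, abs_spin, mul_one]

lemma abs_add_add_add_add_abs_le_four {A B C D : ℝ} (hA : |A| ≤ 1) (hB : |B| ≤ 1)
    (hC : |C| ≤ 1) (hD : |D| ≤ 1) (hsum : |A| + |B| + |C| + |D| ≤ 2) :
    |A + B + C + D| + |A - B - C + D| + |A - B + C - D| + |A + B - C - D| ≤ 4 := by
  have := le_abs_self A; have := neg_abs_le A; have := le_abs_self B; have := neg_abs_le B
  have := le_abs_self C; have := neg_abs_le C; have := le_abs_self D; have := neg_abs_le D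
  rcases abs_cases (A + B + C + D) with ⟨h₁, -⟩ | ⟨h₁, -⟩ <;>
  rcases abs_cases (A - B - C + D) with ⟨h₂, -⟩ | ⟨h₂, -⟩ <;>
  rcases abs_cases (A - B + C - D) with ⟨h₃, -⟩ | ⟨h₃, -⟩ <;>
  rcases abs_cases (A + B - C - D) with ⟨h₄, -⟩ | ⟨h₄, -⟩ <;>
  linarith

lemma sum_abs_gridEnergy_le {a b : Fin 2 → ℝ} (ha : ∀ i, |a i| ≤ 1) (hb : ∀ j, |b j| ≤ 1)
    (hab : |a 0| + |a 1| + |b 0| + |b 1| ≤ 2) :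
    ∑ X, |gridEnergy a b X| ≤ 16 := by
  let M₁ : Grid := ![![false, false], ![true, false]]
  let M₂ : Grid := ![![false, false], ![false, true]]
  let M₃ : Grid := ![![false, false], ![true, true]]
  -- the masks move `X` through the four classes of bond-spin patterns, where the energy takes
  -- the values `A ± B ± C ± D` with `A = a 0 * rowSpin X 0`, ..., `D = b 1 * colSpin X 1`
  have orbit (X : Grid) : |gridEnergy a b X| + |gridEnergy a b (xorMask M₁ X)| +
      |gridEnergy a b (xorMask M₂ X)| + |gridEnergy a b (xorMask M₃ X)| ≤ 4 := by
    simp only [gridEnergy_xorMask]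
    convert abs_add_add_add_add_abs_le_four (A := a 0 * rowSpin X 0) (B := a 1 * rowSpin X 1)
      (C := b 0 * colSpin X 0) (D := b 1 * colSpin X 1)
      (by simpa [abs_mul, abs_rowSpin] using ha 0) (by simpa [abs_mul, abs_rowSpin] using ha 1)
      (by simpa [abs_mul, abs_colSpin] using hb 0) (by simpa [abs_mul, abs_colSpin] using hb 1)
      (by simpa [abs_mul, abs_rowSpin, abs_colSpin] using hab) using 4 <;>
    simp only [M₁, M₂, M₃, gridEnergy, rowSpin, colSpin, Fin.sum_univ_two, Matrix.cons_val_zero,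
      Matrix.cons_val_one, Matrix.cons_val_fin_one, spin_false, spin_true] <;>
    ring_nf
  have hM (M : Grid) : ∑ X, |gridEnergy a b (xorMask M X)| = ∑ X, |gridEnergy a b X| :=
    (xorMask M).sum_comp fun X => |gridEnergy a b X|
  have := Finset.sum_le_sum fun X (_ : X ∈ Finset.univ) => orbit X
  simp only [Finset.sum_add_distrib, hM, Finset.sum_const, Finset.card_univ, card_grid,
    nsmul_eq_mul, Nat.cast_ofNat] at this
  linarith

structure IsGridModel (ν : Grid → ℝ) (a b : Fin 2 → ℝ) : Prop where
  nonneg : ∀ X, 0 ≤ ν X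
  sum_eq_one : ∑ X, ν X = 1
  sum_mul_spin : ∀ i j, ∑ X, ν X * spin (X i j) = 0
  sum_mul_rowSpin : ∀ i, ∑ X, ν X * rowSpin X i = a i
  sum_mul_colSpin : ∀ j, ∑ X, ν X * colSpin X j = b j

/-- The moments of this density are those of `gridEnergy a b / 16`: `|gridEnergy a b|` and the
constant are invariant under the checkerboard flip, which negates every bond spin. The constant
makes the total mass `1` and is nonnegative by `sum_abs_gridEnergy_le`. -/
def gridModel (a b : Fin 2 → ℝ) (X : Grid) : ℝ :=
  (gridEnergy a b X + |gridEnergy a b X| + (1 - (∑ Y, |gridEnergy a b Y|) / 16)) / 16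

lemma gridEnergy_xorMask_top (a b : Fin 2 → ℝ) (X : Grid) :
    gridEnergy a b (xorMask ⊤ X) = gridEnergy a b X := by
  simp only [gridEnergy, rowSpin_xorMask, colSpin_xorMask]
  simp [rowSpin, colSpin]

lemma isGridModel_gridModel {a b : Fin 2 → ℝ} (ha : ∀ i, |a i| ≤ 1) (hb : ∀ j, |b j| ≤ 1)
    (hab : |a 0| + |a 1| + |b 0| + |b 1| ≤ 2) :
    IsGridModel (gridModel a b) a b := by
  set κ := 1 - (∑ Y, |gridEnergy a b Y|) / 16 with hκ
  have hκ_nonneg : 0 ≤ κ := by linarith [sum_abs_gridEnergy_le ha hb hab]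
  have hchecker (f : Grid → ℝ) (hf : ∀ X, f (xorMask checkerboard X) = -f X) :
      ∑ X, (|gridEnergy a b X| + κ) * f X = 0 :=
    sum_eq_zero_of_comp_equiv_eq_neg (xorMask checkerboard) _ fun X => by
      rw [hf, gridEnergy_xorMask_checkerboard, abs_neg, mul_neg]
  have hsplit (f : Grid → ℝ) : ∑ X, gridModel a b X * f X =
      (∑ X, gridEnergy a b X * f X + ∑ X, (|gridEnergy a b X| + κ) * f X) / 16 := by
    rw [← Finset.sum_add_distrib, Finset.sum_div]
    exact Finset.sum_congr rfl fun X _ => by rw [gridModel]; ring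
  refine ⟨fun X => ?_, ?_, fun i j => ?_, fun i => ?_, fun j => ?_⟩
  · rw [gridModel, ← hκ]
    exact div_nonneg (by linarith [neg_abs_le (gridEnergy a b X)]) (by norm_num)
  · have hE : ∑ X, gridEnergy a b X = 0 :=
      sum_eq_zero_of_comp_equiv_eq_neg _ _ (gridEnergy_xorMask_checkerboard a b)
    simp only [gridModel, ← Finset.sum_div, Finset.sum_add_distrib, hE, Finset.sum_const,
      Finset.card_univ, card_grid, nsmul_eq_mul]
    ring
  · refine sum_eq_zero_of_comp_equiv_eq_neg (xorMask ⊤) _ fun X => ?_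
    simp only [gridModel, gridEnergy_xorMask_top, xorMask_apply, spin_xor]
    simp
  · rw [hsplit, sum_gridEnergy_mul_rowSpin, hchecker _ fun X => by
      rw [rowSpin_xorMask, rowSpin_checkerboard, neg_one_mul]]
    ring
  · rw [hsplit, sum_gridEnergy_mul_colSpin, hchecker _ fun X => by
      rw [colSpin_xorMask, colSpin_checkerboard, neg_one_mul]]
    ring

/-! ### Spin form of `ELFP` -/

section SpinForm

variable {α : Type*} [Fintype α] {μ : α → ℝ}

lemma sum_filter_eq_half_iff (hμ : ∑ x, μ x = 1) (a : α → Bool) :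
    ∑ x ∈ Finset.univ.filter (fun x => a x = true), μ x = 1 / 2 ↔
      ∑ x, μ x * spin (a x) = 0 := by
  have : ∑ x ∈ Finset.univ.filter (fun x => a x = true), μ x =
      (∑ x, μ x + ∑ x, μ x * spin (a x)) / 2 := by
    rw [Finset.sum_filter, ← Finset.sum_add_distrib, Finset.sum_div]
    exact Finset.sum_congr rfl fun x _ => by
      cases a x <;> simp only [Bool.false_eq_true, if_true, if_false, spin_true, spin_false] <;>
      ring
  rw [this, hμ]
  constructor <;> intro h <;> linarith

lemma sum_filter_and_eq_iff (hμ : ∑ x, μ x = 1) {a b : α → Bool}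
    (ha : ∑ x, μ x * spin (a x) = 0) (hb : ∑ x, μ x * spin (b x) = 0) (q : ℝ) :
    ∑ x ∈ Finset.univ.filter (fun x => a x = true ∧ b x = true), μ x = q ↔
      ∑ x, μ x * (spin (a x) * spin (b x)) = 4 * q - 1 := by
  have : ∑ x ∈ Finset.univ.filter (fun x => a x = true ∧ b x = true), μ x =
      (∑ x, μ x + ∑ x, μ x * spin (a x) + ∑ x, μ x * spin (b x) +
        ∑ x, μ x * (spin (a x) * spin (b x))) / 4 := by
    simp only [Finset.sum_filter, ← Finset.sum_add_distrib, Finset.sum_div]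
    exact Finset.sum_congr rfl fun x _ => by
      cases a x <;> cases b x <;>
      simp only [Bool.false_eq_true, and_self, and_true, and_false, if_true, if_false, spin_true,
        spin_false] <;>
      ring
  rw [this, hμ, ha, hb]
  constructor <;> intro h <;> linarith

end SpinForm

abbrev Cube := Fin 2 → Grid

def pSpin (h : Cube) (i j : Fin 2) : ℝ := spin (h 0 i j) * spin (h 1 i j)

def epsSpin (h : Cube) : Fin 2 → Fin 2 → ℝ := ![rowSpin (h 0), colSpin (h 1)]

structure IsCubeModel (μ : Cube → ℝ) (r c : Fin 2 → Fin 2 → ℝ) : Prop where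
  nonneg : ∀ h, 0 ≤ μ h
  sum_eq_one : ∑ h, μ h = 1
  sum_mul_spin : ∀ k i j, ∑ h, μ h * spin (h k i j) = 0
  sum_mul_pSpin : ∀ i j, ∑ h, μ h * pSpin h i j = r i j
  sum_mul_epsSpin : ∀ k i, ∑ h, μ h * epsSpin h k i = c k i

lemma elfp_iff (p ε : Fin 2 → Fin 2 → ℝ) :
    ELFP p ε ↔ ∃ μ, IsCubeModel μ (fun i j => 4 * p i j - 1) (fun k i => 4 * ε k i - 1) := by
  constructor
  · rintro ⟨μ, hnn, hsum, hm, hp, he₀, he₁⟩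
    have hm' k i j := (sum_filter_eq_half_iff hsum fun h : Cube => h k i j).1 (hm k i j)
    refine ⟨μ, hnn, hsum, hm',
      fun i j => (sum_filter_and_eq_iff hsum (hm' 0 i j) (hm' 1 i j) _).1 (hp i j), fun k i => ?_⟩
    fin_cases k
    · exact (sum_filter_and_eq_iff hsum (hm' 0 i 0) (hm' 0 i 1) _).1 (he₀ i)
    · exact (sum_filter_and_eq_iff hsum (hm' 1 0 i) (hm' 1 1 i) _).1 (he₁ i)
  · rintro ⟨μ, hnn, hsum, hm, hp, he⟩
    refine ⟨μ, hnn, hsum,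
      fun k i j => (sum_filter_eq_half_iff hsum fun h : Cube => h k i j).2 (hm k i j),
      fun i j => (sum_filter_and_eq_iff hsum (hm 0 i j) (hm 1 i j) _).2 (hp i j),
      fun i => (sum_filter_and_eq_iff hsum (hm 0 i 0) (hm 0 i 1) _).2 (he 0 i),
      fun j => (sum_filter_and_eq_iff hsum (hm 1 0 j) (hm 1 1 j) _).2 (he 1 j)⟩

/-! ### Gluing grid models along independent bonds -/

/-- A cube is its first layer `X` together with the bonds `t (i, j) = (h 0 i j == h 1 i j)`. -/
def cubeEquiv : Grid × (Fin 2 × Fin 2 → Bool) ≃ Cube where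
  toFun Xt := ![Xt.1, fun i j => Xt.1 i j == Xt.2 (i, j)]
  invFun h := (h 0, fun ij => h 0 ij.1 ij.2 == h 1 ij.1 ij.2)
  left_inv Xt := by ext <;> simp
  right_inv h := by
    funext k i j
    fin_cases k <;> simp

lemma spin_cubeEquiv_zero (X : Grid) (t : Fin 2 × Fin 2 → Bool) (i j : Fin 2) :
    spin (cubeEquiv (X, t) 0 i j) = spin (X i j) := rfl

lemma spin_cubeEquiv_one (X : Grid) (t : Fin 2 × Fin 2 → Bool) (i j : Fin 2) :
    spin (cubeEquiv (X, t) 1 i j) = spin (X i j) * spin (t (i, j)) :=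
  spin_beq _ _

lemma pSpin_cubeEquiv (X : Grid) (t : Fin 2 × Fin 2 → Bool) (i j : Fin 2) :
    pSpin (cubeEquiv (X, t)) i j = spin (t (i, j)) := by
  rw [pSpin, spin_cubeEquiv_zero, spin_cubeEquiv_one, ← mul_assoc, spin_mul_self, one_mul]

lemma epsSpin_cubeEquiv_zero (X : Grid) (t : Fin 2 × Fin 2 → Bool) (i : Fin 2) :
    epsSpin (cubeEquiv (X, t)) 0 i = rowSpin X i := rfl

lemma epsSpin_cubeEquiv_one (X : Grid) (t : Fin 2 × Fin 2 → Bool) (j : Fin 2) :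
    epsSpin (cubeEquiv (X, t)) 1 j = colSpin X j * (spin (t (0, j)) * spin (t (1, j))) := by
  change colSpin (cubeEquiv (X, t) 1) j = _
  simp only [colSpin, spin_cubeEquiv_one]
  ring

def mixture (q : (Fin 2 × Fin 2 → Bool) → ℝ) (ν : (Fin 2 × Fin 2 → Bool) → Grid → ℝ)
    (h : Cube) : ℝ :=
  q (cubeEquiv.symm h).2 * ν (cubeEquiv.symm h).2 (cubeEquiv.symm h).1

lemma sum_mixture_mul (q : (Fin 2 × Fin 2 → Bool) → ℝ) (ν : (Fin 2 × Fin 2 → Bool) → Grid → ℝ)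
    (F : Cube → ℝ) :
    ∑ h, mixture q ν h * F h = ∑ t, q t * ∑ X, ν t X * F (cubeEquiv (X, t)) := by
  rw [← cubeEquiv.sum_comp, Fintype.sum_prod_type, Finset.sum_comm]
  simp only [mixture, Equiv.symm_apply_apply, Finset.mul_sum, mul_assoc]

lemma isCubeModel_mixture {r c : Fin 2 → Fin 2 → ℝ} (hr : ∀ i j, |r i j| ≤ 1)
    {ν : (Fin 2 × Fin 2 → Bool) → Grid → ℝ}
    (hν : ∀ t, IsGridModel (ν t) (c 0) fun j => c 1 j * (spin (t (0, j)) * spin (t (1, j)))) :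
    IsCubeModel (mixture (bernoulliProd (Function.uncurry r)) ν) r c := by
  set q := bernoulliProd (Function.uncurry r)
  have hq : ∑ t, q t = 1 := sum_bernoulliProd _
  refine ⟨fun h => ?_, ?_, fun k i j => ?_, fun i j => ?_, fun k i => ?_⟩
  · exact mul_nonneg (bernoulliProd_nonneg (fun ij : Fin 2 × Fin 2 => hr ij.1 ij.2) _)
      ((hν _).nonneg _)
  · have := sum_mixture_mul q ν fun _ => 1
    simp only [mul_one, (hν _).sum_eq_one] at this
    rw [this, hq]
  · rw [sum_mixture_mul]
    fin_cases k
    · simp only [Fin.zero_eta, spin_cubeEquiv_zero, (hν _).sum_mul_spin, mul_zero,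
        Finset.sum_const_zero]
    · simp only [Fin.mk_one, spin_cubeEquiv_one, ← mul_assoc, ← Finset.sum_mul,
        (hν _).sum_mul_spin, zero_mul, mul_zero, Finset.sum_const_zero]
  · simp only [sum_mixture_mul, pSpin_cubeEquiv, ← Finset.sum_mul, (hν _).sum_eq_one, one_mul]
    exact sum_bernoulliProd_mul_spin _ (i, j)
  · rw [sum_mixture_mul]
    fin_cases k
    · simp only [Fin.zero_eta, epsSpin_cubeEquiv_zero, (hν _).sum_mul_rowSpin, ← Finset.sum_mul,
        hq, one_mul]
    · simp only [Fin.mk_one, epsSpin_cubeEquiv_one, ← mul_assoc (ν _ _), ← Finset.sum_mul,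
        (hν _).sum_mul_colSpin, mul_assoc (c 1 i), spin_mul_spin_mul_self, mul_one, hq, one_mul]

lemma abs_epsSpin (h : Cube) (k i : Fin 2) : |epsSpin h k i| = 1 := by
  fin_cases k
  · exact abs_rowSpin _ _
  · exact abs_colSpin _ _

lemma prod_epsSpin (h : Cube) : ∏ k, ∏ i, epsSpin h k i = gridSign (h 0) * gridSign (h 1) := by
  rw [Fin.prod_univ_two, ← prod_rowSpin, ← prod_colSpin]
  rfl

lemma prod_pSpin (h : Cube) : ∏ i, ∏ j, pSpin h i j = gridSign (h 0) * gridSign (h 1) := by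
  simp only [pSpin, gridSign, Finset.prod_mul_distrib]

lemma sum_mul_double_sum {α κ ι : Type*} [Fintype α] [Fintype κ] [Fintype ι] (μ : α → ℝ)
    (w : κ → ι → ℝ) (g : α → κ → ι → ℝ) :
    ∑ h, μ h * ∑ k, ∑ i, w k i * g h k i = ∑ k, ∑ i, w k i * ∑ h, μ h * g h k i := by
  simp only [Finset.mul_sum]
  rw [Finset.sum_comm]
  refine Finset.sum_congr rfl fun k _ => ?_
  rw [Finset.sum_comm]
  exact Finset.sum_congr rfl fun i _ => Finset.sum_congr rfl fun h _ => by ring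

/-- The eight bonds form a cycle, so their spins multiply to `1`: after weighting by signs of
product `-1`, one of the eight `±1` summands is `-1`. -/
lemma bond_sum_le_six (s : Fin 2 → Fin 2 → Bool) (θ : Fin 2 → Fin 2 → ℝ)
    (hθ : ∀ i j, |θ i j| = 1) (hprod : (∏ k, ∏ i, spin (s k i)) * ∏ i, ∏ j, θ i j = -1)
    (h : Cube) :
    ∑ k, ∑ i, spin (s k i) * epsSpin h k i + ∑ i, ∑ j, θ i j * pSpin h i j ≤ 6 := by
  let bond : (Fin 2 × Fin 2) ⊕ (Fin 2 × Fin 2) → ℝ :=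
    Sum.elim (fun ki => spin (s ki.1 ki.2) * epsSpin h ki.1 ki.2)
      (fun ij => θ ij.1 ij.2 * pSpin h ij.1 ij.2)
  have hbond : ∀ x, |bond x| = 1 := by
    rintro (⟨k, i⟩ | ⟨i, j⟩)
    · simp only [bond, Sum.elim_inl, abs_mul, abs_spin, abs_epsSpin, mul_one]
    · simp only [bond, Sum.elim_inr, abs_mul, hθ, abs_spin, pSpin, mul_one]
  have hprod_bond : ∏ x, bond x = -1 := by
    simp only [bond, Fintype.prod_sum_type, Fintype.prod_prod_type, Sum.elim_inl, Sum.elim_inr,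
      Finset.prod_mul_distrib, prod_epsSpin, prod_pSpin]
    calc _ = ((∏ k, ∏ i, spin (s k i)) * ∏ i, ∏ j, θ i j) *
          ((gridSign (h 0) * gridSign (h 0)) * (gridSign (h 1) * gridSign (h 1))) := by ring
      _ = -1 := by rw [hprod, gridSign_mul_self, gridSign_mul_self]; ring
  have hcard : (Fintype.card ((Fin 2 × Fin 2) ⊕ (Fin 2 × Fin 2)) : ℝ) - 2 = 6 := by
    simp only [Fintype.card_sum, Fintype.card_prod, Fintype.card_fin]; norm_num
  have := sum_le_card_sub_two_of_prod_eq_neg_one bond hbond hprod_bond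
  rwa [hcard, Fintype.sum_sum_type, Fintype.sum_prod_type, Fintype.sum_prod_type] at this

lemma Sval_eq (x : Fin 2 → Fin 2 → ℝ) (s : Fin 2 → Fin 2 → Bool) :
    Sval x s = ∑ i, ∑ j, spin (s i j) * (x i j - 1 / 4) := rfl

lemma Sval_le_of_forall_elfp {ε : Fin 2 → Fin 2 → ℝ}
    (hall : ∀ p : Fin 2 → Fin 2 → ℝ, (∀ i j, p i j ∈ Set.Icc (0 : ℝ) (1 / 2)) → ELFP p ε)
    (s : Fin 2 → Fin 2 → Bool) :
    Sval ε s ≤ 1 / 2 := by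
  -- freeze the `p`-bonds (`p ∈ {0, 1/2}`) with signs making the product over the cycle `-1`
  set θ : Fin 2 → Fin 2 → ℝ := fun i j => if (i, j) = (0, 0) then -∏ k, ∏ l, spin (s k l) else 1
  have hθ : ∀ i j, |θ i j| = 1 := fun i j => by
    simp only [θ]; split_ifs
    · simp [abs_spin]
    · exact abs_one
  have hprod : (∏ k, ∏ i, spin (s k i)) * ∏ i, ∏ j, θ i j = -1 := by
    have hθprod : ∏ i, ∏ j, θ i j = -∏ k, ∏ l, spin (s k l) := by simp [θ, Fin.prod_univ_two]
    rw [hθprod, mul_neg, ← Finset.prod_mul_distrib]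
    simp only [← Finset.prod_mul_distrib, spin_mul_self, Finset.prod_const_one]
  obtain ⟨μ, hμ⟩ := (elfp_iff (fun i j => (1 + θ i j) / 4) ε).1 (hall _ fun i j => by
    rcases (abs_eq zero_le_one).1 (hθ i j) with h | h <;> constructor <;> linarith)
  have heps := sum_mul_double_sum μ (fun k i => spin (s k i)) epsSpin
  have hpbond := sum_mul_double_sum μ θ pSpin
  simp only [hμ.sum_mul_epsSpin, hμ.sum_mul_pSpin] at heps hpbond
  have hθθ : ∑ i, ∑ j, θ i j * (4 * ((1 + θ i j) / 4) - 1) = 4 := by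
    simp only [show ∀ i j, θ i j * (4 * ((1 + θ i j) / 4) - 1) = 1 from fun i j => by
      rw [show 4 * ((1 + θ i j) / 4) - 1 = θ i j by ring, ← abs_mul_abs_self, hθ, one_mul]]
    norm_num
  have hbound : ∑ h, μ h * (∑ k, ∑ i, spin (s k i) * epsSpin h k i +
      ∑ i, ∑ j, θ i j * pSpin h i j) ≤ 6 := by
    calc _ ≤ ∑ h, μ h * 6 := Finset.sum_le_sum fun h _ =>
          mul_le_mul_of_nonneg_left (bond_sum_le_six s θ hθ hprod h) (hμ.nonneg h)
      _ = 6 := by rw [← Finset.sum_mul, hμ.sum_eq_one, one_mul]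
  simp only [mul_add, Finset.sum_add_distrib, heps, hpbond, hθθ] at hbound
  have hSval : ∑ k, ∑ i, spin (s k i) * (4 * ε k i - 1) = 4 * Sval ε s := by
    simp only [Sval_eq, Finset.mul_sum]
    exact Finset.sum_congr rfl fun k _ => Finset.sum_congr rfl fun i _ => by ring
  linarith

lemma sum_abs_sub_le_of_maxS_le {ε : Fin 2 → Fin 2 → ℝ} (hmax : maxS ε ≤ 1 / 2) :
    ∑ k, ∑ i, |ε k i - 1 / 4| ≤ 1 / 2 := by
  have hS : Sval ε (fun k i => decide (1 / 4 ≤ ε k i)) ≤ maxS ε :=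
    Finset.le_sup' (Sval ε) (Finset.mem_univ _)
  have habs (x : ℝ) : spin (decide (1 / 4 ≤ x)) * (x - 1 / 4) = |x - 1 / 4| := by
    by_cases hx : 1 / 4 ≤ x
    · rw [decide_eq_true hx, spin_true, one_mul, abs_of_nonneg (by linarith)]
    · rw [decide_eq_false hx, spin_false, abs_of_neg (by linarith)]; ring
  simp only [Sval_eq, habs] at hS
  linarith

lemma elfp_of_maxS_le {ε : Fin 2 → Fin 2 → ℝ} (hε : ∀ k i, ε k i ∈ Set.Icc (0 : ℝ) (1 / 2))
    (hmax : maxS ε ≤ 1 / 2) (p : Fin 2 → Fin 2 → ℝ)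
    (hp : ∀ i j, p i j ∈ Set.Icc (0 : ℝ) (1 / 2)) : ELFP p ε := by
  have hcorr {x : ℝ} (hx : x ∈ Set.Icc (0 : ℝ) (1 / 2)) : |4 * x - 1| ≤ 1 :=
    abs_le.2 ⟨by linarith [hx.1], by linarith [hx.2]⟩
  have hsum : ∑ k, ∑ i, |4 * ε k i - 1| ≤ 2 := by
    have := sum_abs_sub_le_of_maxS_le hmax
    simp only [show ∀ x : ℝ, |4 * x - 1| = 4 * |x - 1 / 4| from fun x => by
      rw [show 4 * x - 1 = 4 * (x - 1 / 4) by ring, abs_mul,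
        abs_of_pos (by norm_num : (0 : ℝ) < 4)],
      ← Finset.mul_sum]
    linarith
  simp only [Fin.sum_univ_two] at hsum
  rw [elfp_iff]
  exact ⟨_, isCubeModel_mixture (fun i j => hcorr (hp i j)) fun t =>
    isGridModel_gridModel (fun i => hcorr (hε 0 i))
      (fun j => by rw [abs_mul, abs_spin_mul_spin, mul_one]; exact hcorr (hε 1 j))
      (by simpa only [abs_mul, abs_spin, mul_one, add_assoc] using hsum)⟩

end

/-- the Fit set for the no-constraint ("chaos") condition:
`ε` is compatible with every `p ∈ [0,1/2]⁴` iff `max Sε ≤ 1/2`. -/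
theorem fit_chaos
    (ε : Fin 2 → Fin 2 → ℝ)
    (hε : ∀ k i, ε k i ∈ Set.Icc (0 : ℝ) (1 / 2)) :
    (∀ p : Fin 2 → Fin 2 → ℝ, (∀ i j, p i j ∈ Set.Icc (0 : ℝ) (1 / 2)) → ELFP p ε) ↔
      maxS ε ≤ 1 / 2 :=
  ⟨fun hall => Finset.sup'_le _ _ fun s _ => Sval_le_of_forall_elfp hall s,
    fun hmax => elfp_of_maxS_le hε hmax⟩
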